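/- arXiv:1909.12759 — 4 statements merged into one kernel-verified Lean document; each statement's English description precedes it below -/
import Mathlib

section
/- Let H, K be finite-dimensional complex Hilbert spaces, let (S_a)_{a∈A} be a finite family of self-adjoint operators on H with 0 ≤ S_a ≤ 1, and let (M_a)_{a∈A} be positive semidefinite operators on K with ∑_a M_a = 1 and each M_a ≠ 0. If ∑_a S_a ⊗ M_a = 1_{H⊗K}, then S_a = 1_H for every a ∈ A. -/
open Kronecker ComplexOrder

/-!
Since `∑ M a = 1`, the hypothesis says `∑ (1 - S a) ⊗ M a = 1 ⊗ 1 - 1 = 0`. Each summand is a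
Kronecker product of positive semidefinite matrices, hence positive semidefinite, and positive
semidefinite matrices summing to zero all vanish. Finally `(1 - S a) ⊗ M a = 0` with `M a ≠ 0`
forces `1 - S a = 0`.
-/

namespace Matrix

variable {l m n p ι α : Type*}

theorem sub_kronecker [NonUnitalNonAssocRing α] (A₁ A₂ : Matrix l m α) (B : Matrix n p α) :
    (A₁ - A₂) ⊗ₖ B = A₁ ⊗ₖ B - A₂ ⊗ₖ B := by
  ext ⟨i₁, i₂⟩ ⟨j₁, j₂⟩
  simp [sub_mul]

theorem kronecker_sum [NonUnitalNonAssocSemiring α] (A : Matrix l m α) (s : Finset ι)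
    (B : ι → Matrix n p α) : A ⊗ₖ (∑ i ∈ s, B i) = ∑ i ∈ s, A ⊗ₖ B i := by
  ext ⟨i₁, i₂⟩ ⟨j₁, j₂⟩
  simp [Matrix.sum_apply, Finset.mul_sum]

theorem eq_zero_of_kronecker_eq_zero [MulZeroClass α] [NoZeroDivisors α]
    {A : Matrix l m α} {B : Matrix n p α} (h : A ⊗ₖ B = 0) (hB : B ≠ 0) : A = 0 := by
  obtain ⟨k, k', hkk'⟩ : ∃ k k', B k k' ≠ 0 := by
    by_contra! hB'
    exact hB (ext hB')
  ext i j
  simpa [hkk'] using congr_fun₂ h (i, k) (j, k')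

open scoped MatrixOrder in
theorem PosSemidef.eq_zero_of_sum_eq_zero {𝕜 : Type*} [RCLike 𝕜] [Fintype n]
    {s : Finset ι} {T : ι → Matrix n n 𝕜}
    (hT : ∀ i ∈ s, (T i).PosSemidef) (hsum : ∑ i ∈ s, T i = 0) : ∀ i ∈ s, T i = 0 :=
  (Finset.sum_eq_zero_iff_of_nonneg fun i hi => (hT i hi).nonneg).mp hsum

end Matrix

open Matrix in
theorem stmt1_general {dH dK : ℕ} {A : Type*} [Fintype A]
    (S : A → Matrix (Fin dH) (Fin dH) ℂ) (M : A → Matrix (Fin dK) (Fin dK) ℂ)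
    (hS1 : ∀ a, ((1 : Matrix (Fin dH) (Fin dH) ℂ) - S a).PosSemidef)
    (hM : ∀ a, (M a).PosSemidef) (hMsum : ∑ a, M a = 1) (hMne : ∀ a, M a ≠ 0)
    (hkron : ∑ a, (S a ⊗ₖ M a) = (1 : Matrix ((Fin dH) × (Fin dK)) ((Fin dH) × (Fin dK)) ℂ)) :
    ∀ a, S a = 1 := by
  have hsum : ∑ a, (1 - S a) ⊗ₖ M a = 0 := by
    simp only [sub_kronecker, Finset.sum_sub_distrib, ← kronecker_sum, hMsum, hkron,
      one_kronecker_one, sub_self]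
  intro a
  have hzero := PosSemidef.eq_zero_of_sum_eq_zero (fun a _ => (hS1 a).kronecker (hM a)) hsum a
    (Finset.mem_univ a)
  exact (sub_eq_zero.mp (eq_zero_of_kronecker_eq_zero hzero (hMne a))).symm

/-- if `(S a)` are self-adjoint with `0 ≤ S a ≤ 1`, `(M a)` are positive
semidefinite with `∑ M a = 1` and each `M a ≠ 0`, and `∑ S a ⊗ M a = 1`, then every
`S a` is the identity. -/
theorem stmt1 {dH dK : ℕ} {A : Type*} [Fintype A]
    (S : A → Matrix (Fin dH) (Fin dH) ℂ) (M : A → Matrix (Fin dK) (Fin dK) ℂ)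
    (hS0 : ∀ a, (S a).PosSemidef) (hS1 : ∀ a, ((1 : Matrix (Fin dH) (Fin dH) ℂ) - S a).PosSemidef)
    (hM : ∀ a, (M a).PosSemidef) (hMsum : ∑ a, M a = 1) (hMne : ∀ a, M a ≠ 0)
    (hkron : ∑ a, (S a ⊗ₖ M a) = (1 : Matrix ((Fin dH) × (Fin dK)) ((Fin dH) × (Fin dK)) ℂ)) :
    ∀ a, S a = 1 :=
  stmt1_general S M hS1 hM hMsum hMne hkron
end

section
/- Let H, K be finite-dimensional complex Hilbert spaces, let T be a positive semidefinite operator on H ⊗ K, and suppose the partial trace of T over H equals c·P where c ≥ 0 and P is a rank-one orthogonal projection on K. Then T = S ⊗ P for some positive semidefinite operator S on H. -/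
/-!
Write the rank-one projection as `P = u uᴴ`. Then
`tr ((1 ⊗ (1 - P)) T) = tr (ptraceLeft T * (1 - P)) = c tr (P (1 - P)) = 0`, and a positive
semidefinite `T` whose compression to the range of the projection `1 ⊗ (1 - P)` has trace zero is
annihilated by it, so `T = (1 ⊗ P) T (1 ⊗ P)`. Compressing through `1 ⊗ u` then gives
`T = S ⊗ P` with `S = (1 ⊗ u)ᴴ T (1 ⊗ u)`, which is positive semidefinite.
-/

open Kronecker ComplexOrder

/-- Partial trace over the first tensor factor. -/
noncomputable def ptraceLeft {m n : Type*} [Fintype m] (T : Matrix (m × n) (m × n) ℂ) : Matrix n n ℂ :=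
  Matrix.of fun i j => ∑ k, T (k, i) (k, j)

namespace Matrix

variable {m n : Type*}

theorem exists_eq_vecMulVec_of_rank_le_one {K : Type*} [Field K] [Fintype n] [Finite m]
    (A : Matrix m n K) (hA : A.rank ≤ 1) : ∃ v w, A = vecMulVec v w := by
  rw [rank_eq_finrank_span_cols] at hA
  obtain ⟨v, hv⟩ := finrank_le_one_iff.mp hA
  choose w hw using fun j => hv ⟨A.col j, Submodule.subset_span ⟨j, rfl⟩⟩
  refine ⟨v, w, ext fun i j => ?_⟩
  simpa [vecMulVec_apply, mul_comm] using (congr_arg (fun x => x.1 i) (hw j)).symm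

theorem IsHermitian.exists_eq_vecMulVec_star_of_mul_self_of_rank_le_one {𝕜 : Type*} [RCLike 𝕜]
    [Fintype n] {P : Matrix n n 𝕜} (hP : P.IsHermitian) (hPP : P * P = P)
    (hrank : P.rank ≤ 1) :
    ∃ u, P = vecMulVec u (star u) := by
  obtain ⟨v, w, rfl⟩ := exists_eq_vecMulVec_of_rank_le_one _ hrank
  obtain ⟨r, hr0, hr⟩ := RCLike.nonneg_iff_exists_ofReal.mp (dotProduct_star_self_nonneg v)
  refine ⟨(√r : 𝕜) • star w, ?_⟩
  calc vecMulVec v w = (vecMulVec v w)ᴴ * vecMulVec v w := by rw [hP.eq, hPP]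
    _ = vecMulVec ((√r : 𝕜) • star w) (star ((√r : 𝕜) • star w)) := by
      rw [conjTranspose_vecMulVec, vecMulVec_mul_vecMulVec, ← hr, star_smul, star_star,
        RCLike.star_def, RCLike.conj_ofReal, smul_vecMulVec, vecMulVec_smul, vecMulVec_smul,
        smul_smul, ← RCLike.ofReal_mul, Real.mul_self_sqrt hr0]

theorem PosSemidef.mul_eq_zero_of_trace_conjTranspose_mul_mul_eq_zero {𝕜 : Type*} [RCLike 𝕜]
    [Fintype m] [Fintype n] {T : Matrix n n 𝕜} (hT : T.PosSemidef) {A : Matrix n m 𝕜}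
    (h : (Aᴴ * T * A).trace = 0) : T * A = 0 := by
  classical
  open scoped MatrixOrder in
  obtain ⟨B, rfl⟩ := CStarAlgebra.nonneg_iff_eq_star_mul_self.mp hT.nonneg
  rw [star_eq_conjTranspose] at h ⊢
  rw [conjTranspose_mul_self_mul_eq_zero, ← trace_conjTranspose_mul_self_eq_zero_iff]
  simpa only [conjTranspose_mul, Matrix.mul_assoc] using h

theorem one_kronecker_mul_mul_one_kronecker {R ι : Type*} [CommSemiring R] [Unique ι]
    [Fintype m] [DecidableEq m] [Fintype n] (C : Matrix n ι R) (D : Matrix ι n R)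
    (T : Matrix (m × n) (m × n) R) :
    ((1 : Matrix m m R) ⊗ₖ (C * D)) * T * ((1 : Matrix m m R) ⊗ₖ (C * D)) =
      (((1 : Matrix m m R) ⊗ₖ D) * T * ((1 : Matrix m m R) ⊗ₖ C)).submatrix
        (·, default) (·, default) ⊗ₖ (C * D) := by
  set N := ((1 : Matrix m m R) ⊗ₖ D) * T * ((1 : Matrix m m R) ⊗ₖ C)
  set S := N.submatrix (·, default) (·, default)
  have hN : N = S ⊗ₖ (1 : Matrix ι ι R) := by
    ext ⟨a, i⟩ ⟨b, j⟩
    simp [S, Unique.eq_default i, Unique.eq_default j]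
  have hCD : (1 : Matrix m m R) ⊗ₖ (C * D) =
      ((1 : Matrix m m R) ⊗ₖ C) * ((1 : Matrix m m R) ⊗ₖ D) := by
    rw [← mul_kronecker_mul, Matrix.one_mul]
  calc ((1 : Matrix m m R) ⊗ₖ (C * D)) * T * ((1 : Matrix m m R) ⊗ₖ (C * D))
      = ((1 : Matrix m m R) ⊗ₖ C) * N * ((1 : Matrix m m R) ⊗ₖ D) := by
        simp only [N, hCD, Matrix.mul_assoc]
    _ = S ⊗ₖ (C * D) := by
        rw [hN, ← mul_kronecker_mul, ← mul_kronecker_mul, Matrix.one_mul, Matrix.mul_one,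
          Matrix.mul_one]

theorem IsHermitian.mul_mul_eq_self_of_mul_one_sub_eq_zero {R : Type*} [Ring R] [StarRing R]
    [Fintype n] [DecidableEq n] {T E : Matrix n n R} (hT : T.IsHermitian) (hE : E.IsHermitian)
    (h : T * (1 - E) = 0) : E * T * E = T := by
  have hTE : T * E = T := by rwa [Matrix.mul_sub, Matrix.mul_one, sub_eq_zero, eq_comm] at h
  have hET : E * T = T := by
    simpa only [conjTranspose_mul, hE.eq, hT.eq] using congr_arg (·ᴴ) hTE
  rw [hET, hTE]

end Matrix

open Matrix

theorem trace_ptraceLeft_mul {m n : Type*} [Fintype m] [DecidableEq m] [Fintype n]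
    (T : Matrix (m × n) (m × n) ℂ) (Q : Matrix n n ℂ) :
    (ptraceLeft T * Q).trace = (T * ((1 : Matrix m m ℂ) ⊗ₖ Q)).trace := by
  simp only [trace, diag, mul_apply, ptraceLeft, of_apply, kronecker_apply, one_apply, ite_mul,
    one_mul, zero_mul, mul_ite, mul_zero, Finset.sum_mul, Fintype.sum_prod_type]
  simp only [Finset.sum_ite_irrel, Finset.sum_const_zero, Finset.sum_ite_eq', Finset.mem_univ,
    if_true]
  exact (Finset.sum_congr rfl fun _ _ => Finset.sum_comm).trans Finset.sum_comm

theorem stmt2_general {dH dK : ℕ}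
    (T : Matrix ((Fin dH) × (Fin dK)) ((Fin dH) × (Fin dK)) ℂ) (hT : T.PosSemidef)
    (c : ℝ)
    (P : Matrix (Fin dK) (Fin dK) ℂ) (hPh : P.IsHermitian) (hPp : P * P = P)
    (hPrank : P.rank = 1)
    (hptr : ptraceLeft T = (c : ℂ) • P) :
    ∃ S : Matrix (Fin dH) (Fin dH) ℂ, S.PosSemidef ∧ T = S ⊗ₖ P := by
  set E := (1 : Matrix (Fin dH) (Fin dH) ℂ) ⊗ₖ P
  have hE : E.IsHermitian := by rw [IsHermitian, conjTranspose_kronecker, conjTranspose_one, hPh.eq]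
  have hEE : IsIdempotentElem E := by
    rw [IsIdempotentElem, ← mul_kronecker_mul, Matrix.one_mul, hPp]
  have hF : 1 - E = (1 : Matrix (Fin dH) (Fin dH) ℂ) ⊗ₖ (1 - P) := by
    rw [sub_eq_iff_eq_add, ← kronecker_add, sub_add_cancel, one_kronecker_one]
  have hTF : T * (1 - E) = 0 := by
    refine hT.mul_eq_zero_of_trace_conjTranspose_mul_mul_eq_zero ?_
    rw [(isHermitian_one.sub hE).eq, trace_mul_cycle, hEE.one_sub.eq, trace_mul_comm, hF,
      ← trace_ptraceLeft_mul, hptr, Matrix.smul_mul, Matrix.mul_sub, hPp, Matrix.mul_one,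
      sub_self, smul_zero, trace_zero]
  have hT_eq : E * T * E = T := hT.isHermitian.mul_mul_eq_self_of_mul_one_sub_eq_zero hE hTF
  obtain ⟨u, hu⟩ := hPh.exists_eq_vecMulVec_star_of_mul_self_of_rank_le_one hPp hPrank.le
  set C := replicateCol Unit u
  have hP : P = C * Cᴴ := by rw [hu, conjTranspose_replicateCol, vecMulVec_eq Unit]
  refine ⟨_, (hT.conjTranspose_mul_mul_same ((1 : Matrix (Fin dH) (Fin dH) ℂ) ⊗ₖ C)).submatrix
    (·, ()), ?_⟩
  calc T = E * T * E := hT_eq.symm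
    _ = _ := by
      rw [show E = (1 : Matrix (Fin dH) (Fin dH) ℂ) ⊗ₖ (C * Cᴴ) by rw [← hP],
        one_kronecker_mul_mul_one_kronecker, conjTranspose_kronecker, conjTranspose_one, hP]

/-- a positive semidefinite operator on `H ⊗ K` whose partial trace over `H`
is a nonnegative multiple of a rank-one orthogonal projection `P` factorizes as `S ⊗ P`. -/
theorem stmt2 {dH dK : ℕ}
    (T : Matrix ((Fin dH) × (Fin dK)) ((Fin dH) × (Fin dK)) ℂ) (hT : T.PosSemidef)
    (c : ℝ) (hc : 0 ≤ c)
    (P : Matrix (Fin dK) (Fin dK) ℂ) (hPh : P.IsHermitian) (hPp : P * P = P)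
    (hPrank : P.rank = 1)
    (hptr : ptraceLeft T = (c : ℂ) • P) :
    ∃ S : Matrix (Fin dH) (Fin dH) ℂ, S.PosSemidef ∧ T = S ⊗ₖ P :=
  stmt2_general T hT c P hPh hPp hPrank hptr
end

section
/- For any quantum state ρ on a bipartite finite-dimensional Hilbert space H_A ⊗ H_B and any self-adjoint operators A_0, A_1 on H_A and B_0, B_1 on H_B with A_x² = 1 and B_y² = 1, the CHSH value tr[(A_0⊗B_0 + A_0⊗B_1 + A_1⊗B_0 − A_1⊗B_1) ρ] is at most 2√2. -/
open Kronecker ComplexOrder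

/-!
Put `aₓ = Aₓ ⊗ 1` and `b_y = 1 ⊗ B_y`: commuting involutions whose products `aₓ b_y` are the
CHSH terms. With `C = a₀b₀ + a₀b₁ + a₁b₀ - a₁b₁`, the sum of squares identity
`(√2 a₀ - b₀ - b₁)² + (√2 a₁ - b₀ + b₁)² = 2√2 (2√2 - C)` exhibits `2√2 - C` as a positive
operator, so its expectation in any state is nonnegative.
-/

theorem chsh_sum_sq_eq {R : Type*} [Ring R] [Algebra ℝ R] {a₀ a₁ b₀ b₁ : R}
    (ha₀ : a₀ * a₀ = 1) (ha₁ : a₁ * a₁ = 1) (hb₀ : b₀ * b₀ = 1) (hb₁ : b₁ * b₁ = 1)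
    (h₀₀ : Commute a₀ b₀) (h₀₁ : Commute a₀ b₁) (h₁₀ : Commute a₁ b₀) (h₁₁ : Commute a₁ b₁) :
    (2 * √2) • ((2 * √2) • 1 - (a₀ * b₀ + a₀ * b₁ + a₁ * b₀ - a₁ * b₁)) =
      (√2 • a₀ - (b₀ + b₁)) * (√2 • a₀ - (b₀ + b₁)) +
        (√2 • a₁ - (b₀ - b₁)) * (√2 • a₁ - (b₀ - b₁)) := by
  have hs : √2 ^ 2 = 2 := Real.sq_sqrt zero_le_two
  simp only [mul_sub, sub_mul, mul_add, add_mul, smul_mul_assoc, mul_smul_comm,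
    ha₀, ha₁, hb₀, hb₁, h₀₀.eq, h₀₁.eq, h₁₀.eq, h₁₁.eq]
  match_scalars
  · linear_combination 2 * hs
  all_goals ring

namespace Matrix

variable {m n : Type*}

theorem IsHermitian.kronecker {A : Matrix m m ℂ} {B : Matrix n n ℂ} (hA : A.IsHermitian)
    (hB : B.IsHermitian) : (A ⊗ₖ B).IsHermitian := by
  rw [IsHermitian, conjTranspose_kronecker, hA.eq, hB.eq]

variable [Fintype m] [Fintype n]

theorem PosSemidef.trace_mul_self_mul_nonneg {ρ : Matrix n n ℂ} (hρ : ρ.PosSemidef)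
    {P : Matrix n n ℂ} (hP : P.IsHermitian) : 0 ≤ (P * P * ρ).trace := by
  rw [Matrix.mul_assoc, trace_mul_comm]
  simpa only [hP.eq] using (hρ.conjTranspose_mul_mul_same P).trace_nonneg

theorem PosSemidef.re_trace_mul_le_of_smul_sub_eq [DecidableEq n] {ρ : Matrix n n ℂ}
    (hρ : ρ.PosSemidef) (hρtr : ρ.trace = 1) {C P Q : Matrix n n ℂ} (hP : P.IsHermitian)
    (hQ : Q.IsHermitian) {s t : ℝ} (hs : 0 < s) (hC : s • (t • 1 - C) = P * P + Q * Q) :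
    (C * ρ).trace.re ≤ t := by
  have hPQ := add_nonneg (hρ.trace_mul_self_mul_nonneg hP) (hρ.trace_mul_self_mul_nonneg hQ)
  rw [← trace_add, ← add_mul, ← hC, smul_mul_assoc, sub_mul, smul_mul_assoc, Matrix.one_mul,
    trace_smul, trace_sub, trace_smul, hρtr] at hPQ
  have hre : 0 ≤ s * (t - (C * ρ).trace.re) := by simpa using (Complex.nonneg_iff.mp hPQ).1
  linarith [nonneg_of_mul_nonneg_right hre hs]

variable {R : Type*} [CommSemiring R] [DecidableEq m] [DecidableEq n]

theorem kronecker_eq_kronecker_one_mul_one_kronecker (A : Matrix m m R) (B : Matrix n n R) :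
    A ⊗ₖ B = A ⊗ₖ (1 : Matrix n n R) * (1 : Matrix m m R) ⊗ₖ B := by
  rw [← mul_kronecker_mul, mul_one, one_mul]

theorem commute_kronecker_one_one_kronecker (A : Matrix m m R) (B : Matrix n n R) :
    Commute (A ⊗ₖ (1 : Matrix n n R)) ((1 : Matrix m m R) ⊗ₖ B) := by
  rw [Commute, SemiconjBy, ← kronecker_eq_kronecker_one_mul_one_kronecker, ← mul_kronecker_mul,
    mul_one, one_mul]

theorem kronecker_mul_kronecker_eq_one {A : Matrix m m R} {B : Matrix n n R} (hA : A * A = 1)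
    (hB : B * B = 1) : A ⊗ₖ B * A ⊗ₖ B = 1 := by
  rw [← mul_kronecker_mul, hA, hB, one_kronecker_one]

end Matrix

open Matrix in
/-- Tsirelson's bound: for any bipartite quantum state `ρ` and ±1-valued
observables `A x`, `B y`, the CHSH value is at most `2√2`. -/
theorem stmt4 {dA dB : ℕ}
    (ρ : Matrix ((Fin dA) × (Fin dB)) ((Fin dA) × (Fin dB)) ℂ)
    (hρ : ρ.PosSemidef) (hρtr : ρ.trace = 1)
    (A : Fin 2 → Matrix (Fin dA) (Fin dA) ℂ) (B : Fin 2 → Matrix (Fin dB) (Fin dB) ℂ)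
    (hAh : ∀ x, (A x).IsHermitian) (hBh : ∀ y, (B y).IsHermitian)
    (hA2 : ∀ x, A x * A x = 1) (hB2 : ∀ y, B y * B y = 1) :
    (((A 0 ⊗ₖ B 0 + A 0 ⊗ₖ B 1 + A 1 ⊗ₖ B 0 - A 1 ⊗ₖ B 1) * ρ).trace).re
      ≤ 2 * Real.sqrt 2 := by
  set a := fun x => A x ⊗ₖ (1 : Matrix (Fin dB) (Fin dB) ℂ)
  set b := fun y => (1 : Matrix (Fin dA) (Fin dA) ℂ) ⊗ₖ B y
  have ha x : a x * a x = 1 := kronecker_mul_kronecker_eq_one (hA2 x) (one_mul 1)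
  have hb y : b y * b y = 1 := kronecker_mul_kronecker_eq_one (one_mul 1) (hB2 y)
  have hab x y : Commute (a x) (b y) := commute_kronecker_one_one_kronecker (A x) (B y)
  have haH x : (a x).IsHermitian := (hAh x).kronecker isHermitian_one
  have hbH y : (b y).IsHermitian := isHermitian_one.kronecker (hBh y)
  have hsqrt2 : IsSelfAdjoint √2 := IsSelfAdjoint.all _
  simp only [kronecker_eq_kronecker_one_mul_one_kronecker (A _) (B _)]
  exact hρ.re_trace_mul_le_of_smul_sub_eq hρtr (((haH 0).smul hsqrt2).sub ((hbH 0).add (hbH 1)))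
    (((haH 1).smul hsqrt2).sub ((hbH 0).sub (hbH 1))) (by positivity)
    (chsh_sum_sq_eq (ha 0) (ha 1) (hb 0) (hb 1) (hab 0 0) (hab 0 1) (hab 1 0) (hab 1 1))
end

section
/- Let A_0, A_1 be self-adjoint involutions on a finite-dimensional Hilbert space H that anticommute: A_0 A_1 + A_1 A_0 = 0. Then the dimension of H is even, and there is a unitary U : H → ℂ² ⊗ K for some Hilbert space K such that U A_0 U† = σ_Z ⊗ 1 and U A_1 U† = σ_X ⊗ 1. -/
open Kronecker Matrix

noncomputable def sigmaZ : Matrix (Fin 2) (Fin 2) ℂ := !![1, 0; 0, -1]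
noncomputable def sigmaX : Matrix (Fin 2) (Fin 2) ℂ := !![0, 1; 1, 0]

/-!
Since `A₁` anticommutes with `A₀`, it maps the `+1`-eigenspace `V` of `A₀` into the
`-1`-eigenspace, and being a self-adjoint involution it preserves inner products. Hence an
orthonormal basis `(bᵢ)` of `V` together with `(A₁ bᵢ)` is orthonormal; it spans, because every
vector is `(x + A₀ x)/2 + A₁ (A₁ ((x - A₀ x)/2))` with both `(x + A₀ x)/2` and
`A₁ ((x - A₀ x)/2)` in `V`. In this basis `A₀` and `A₁` act as `σ_Z ⊗ 1` and `σ_X ⊗ 1`, and the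
dimension is `2 dim V`.
-/

open Module

section AnticommutingInvolutions

variable {𝕜 E : Type*} [RCLike 𝕜] [NormedAddCommGroup E] [InnerProductSpace 𝕜 E]
  {A₀ A₁ : Module.End 𝕜 E}

local notation "⟪" x ", " y "⟫" => inner 𝕜 x y

lemma LinearMap.IsSymmetric.inner_eq_zero_of_apply_eq_neg (hA : A₀.IsSymmetric) {u w : E}
    (hu : A₀ u = u) (hw : A₀ w = -w) : ⟪u, w⟫ = 0 := by
  have h : ⟪u, w⟫ = -⟪u, w⟫ := by
    conv_lhs => rw [← hu]
    rw [hA, hw, inner_neg_right]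
  exact CharZero.eq_neg_self_iff.mp h

lemma Module.End.apply_apply_of_mul_self_eq_one (h : A₁ * A₁ = 1) (x : E) : A₁ (A₁ x) = x :=
  LinearMap.congr_fun h x

lemma Module.End.apply_apply_eq_neg_of_mul_add_mul_eq_zero (hanti : A₀ * A₁ + A₁ * A₀ = 0)
    (x : E) : A₀ (A₁ x) = -A₁ (A₀ x) :=
  eq_neg_of_add_eq_zero_left (LinearMap.congr_fun hanti x)

lemma LinearMap.IsSymmetric.inner_apply_apply_of_mul_self_eq_one (hA : A₁.IsSymmetric)
    (h : A₁ * A₁ = 1) (x y : E) : ⟪A₁ x, A₁ y⟫ = ⟪x, y⟫ := by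
  rw [hA, Module.End.apply_apply_of_mul_self_eq_one h]

lemma Submodule.eq_top_of_eigenspace_one_le_of_map_le (h₀ : A₀ * A₀ = 1) (h₁ : A₁ * A₁ = 1)
    (hanti : A₀ * A₁ + A₁ * A₀ = 0) {S : Submodule 𝕜 E} (hV : A₀.eigenspace 1 ≤ S)
    (hS : S.map A₁ ≤ S) : S = ⊤ := by
  refine Submodule.eq_top_iff'.mpr fun x ↦ ?_
  set y := (2 : 𝕜)⁻¹ • (x + A₀ x)
  set z := (2 : 𝕜)⁻¹ • (x - A₀ x)
  have hy : y ∈ A₀.eigenspace 1 := by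
    rw [Module.End.mem_eigenspace_iff, one_smul]
    simp only [y, map_smul, map_add, Module.End.apply_apply_of_mul_self_eq_one h₀, add_comm]
  have hz : A₁ z ∈ A₀.eigenspace 1 := by
    rw [Module.End.mem_eigenspace_iff, one_smul,
      Module.End.apply_apply_eq_neg_of_mul_add_mul_eq_zero hanti]
    simp only [z, map_smul, map_sub, Module.End.apply_apply_of_mul_self_eq_one h₀]
    module
  have hx : x = y + A₁ (A₁ z) := by
    rw [Module.End.apply_apply_of_mul_self_eq_one h₁]
    module
  rw [hx]
  exact S.add_mem (hV hy) (hS (Submodule.mem_map_of_mem (hV hz)))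

theorem exists_orthonormalBasis_of_anticommuting_involutions [FiniteDimensional 𝕜 E]
    (hA₀ : A₀.IsSymmetric) (hA₁ : A₁.IsSymmetric) (h₀ : A₀ * A₀ = 1) (h₁ : A₁ * A₁ = 1)
    (hanti : A₀ * A₁ + A₁ * A₀ = 0) :
    ∃ (k : ℕ) (e : OrthonormalBasis (Fin 2 × Fin k) 𝕜 E), ∀ i,
      A₀ (e (0, i)) = e (0, i) ∧ A₀ (e (1, i)) = -e (1, i) ∧
      A₁ (e (0, i)) = e (1, i) ∧ A₁ (e (1, i)) = e (0, i) := by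
  set V := A₀.eigenspace 1
  let b := stdOrthonormalBasis 𝕜 V
  let v : Fin 2 × Fin (finrank 𝕜 V) → E := fun r ↦ ![(b r.2 : E), A₁ (b r.2)] r.1
  have hb₀ (i) : A₀ (b i) = b i := by
    simpa using Module.End.mem_eigenspace_iff.mp (b i).2
  have hb₁ (i) : A₀ (A₁ (b i)) = -A₁ (b i) := by
    rw [Module.End.apply_apply_eq_neg_of_mul_add_mul_eq_zero hanti, hb₀]
  have hb := orthonormal_iff_ite.mp (b.orthonormal.comp_linearIsometry V.subtypeₗᵢ)
  have hv : Orthonormal 𝕜 v := by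
    rw [orthonormal_iff_ite]
    rintro ⟨p, i⟩ ⟨q, j⟩
    fin_cases p <;> fin_cases q
    · simpa [v] using hb i j
    · simp [v, hA₀.inner_eq_zero_of_apply_eq_neg (hb₀ i) (hb₁ j)]
    · simp [v, inner_eq_zero_symm.mp (hA₀.inner_eq_zero_of_apply_eq_neg (hb₀ j) (hb₁ i))]
    · simpa [v, hA₁.inner_apply_apply_of_mul_self_eq_one h₁] using hb i j
  have hspan : Submodule.span 𝕜 (Set.range v) = ⊤ := by
    refine Submodule.eq_top_of_eigenspace_one_le_of_map_le h₀ h₁ hanti ?_ ?_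
    · intro x hx
      have hx' : (⟨x, hx⟩ : V) ∈ Submodule.span 𝕜 (Set.range b) := by
        rw [← b.coe_toBasis, b.toBasis.span_eq]
        trivial
      refine Submodule.span_mono ?_ (Submodule.apply_mem_span_image_of_mem_span V.subtype hx')
      rintro _ ⟨_, ⟨i, rfl⟩, rfl⟩
      exact ⟨(0, i), rfl⟩
    · rw [Submodule.map_span_le]
      rintro _ ⟨⟨p, i⟩, rfl⟩
      fin_cases p
      · exact Submodule.subset_span ⟨(1, i), rfl⟩
      · exact Submodule.subset_span
          ⟨(0, i), (Module.End.apply_apply_of_mul_self_eq_one h₁ _).symm⟩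
  refine ⟨_, OrthonormalBasis.mk hv hspan.ge, fun i ↦ ?_⟩
  rw [OrthonormalBasis.coe_mk]
  exact ⟨hb₀ i, hb₁ i, rfl, Module.End.apply_apply_of_mul_self_eq_one h₁ _⟩

end AnticommutingInvolutions

lemma LinearMap.toMatrix_eq_kroneckerMap_one {R M ι κ : Type*} [CommSemiring R]
    [AddCommMonoid M] [Module R M] [Fintype ι] [DecidableEq ι] [Fintype κ] [DecidableEq κ]
    (b : Basis (ι × κ) R M) (f : M →ₗ[R] M) (S : Matrix ι ι R)
    (h : ∀ q j, f (b (q, j)) = ∑ p, S p q • b (p, j)) :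
    LinearMap.toMatrix b b f = S ⊗ₖ (1 : Matrix κ κ R) := by
  refine (Matrix.toLin b b).injective (b.ext fun ⟨q, j⟩ ↦ ?_)
  rw [Matrix.toLin_toMatrix, Matrix.toLin_self, h, Fintype.sum_prod_type]
  simp [Matrix.one_apply, ite_smul]

lemma OrthonormalBasis.toMatrix_mul_toMatrix_mul_conjTranspose {𝕜 E ι κ : Type*}
    [RCLike 𝕜] [NormedAddCommGroup E] [InnerProductSpace 𝕜 E]
    [Fintype ι] [DecidableEq ι] [Fintype κ] [DecidableEq κ]
    (a : OrthonormalBasis ι 𝕜 E) (b : OrthonormalBasis κ 𝕜 E) (f : E →ₗ[𝕜] E) :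
    a.toBasis.toMatrix b * LinearMap.toMatrix b.toBasis b.toBasis f * (a.toBasis.toMatrix b)ᴴ =
      LinearMap.toMatrix a.toBasis a.toBasis f := by
  have hinv : (a.toBasis.toMatrix b)ᴴ = b.toBasis.toMatrix a := by
    have hflip : a.toBasis.toMatrix b * b.toBasis.toMatrix a = 1 := by
      simpa using a.toBasis.toMatrix_mul_toMatrix_flip b.toBasis
    calc (a.toBasis.toMatrix b)ᴴ
        = (a.toBasis.toMatrix b)ᴴ * (a.toBasis.toMatrix b * b.toBasis.toMatrix a) := by
          rw [hflip, Matrix.mul_one]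
      _ = b.toBasis.toMatrix a := by
          rw [← Matrix.mul_assoc, a.toMatrix_orthonormalBasis_conjTranspose_mul_self,
            Matrix.one_mul]
  rw [hinv]
  simpa using basis_toMatrix_mul_linearMap_toMatrix_mul_basis_toMatrix a.toBasis b.toBasis
    a.toBasis b.toBasis f

/-- a pair of anticommuting self-adjoint involutions on a finite-dimensional
Hilbert space forces the dimension to be even, and up to a unitary `U : H → ℂ² ⊗ K`
the pair is `σ_Z ⊗ 1`, `σ_X ⊗ 1`. -/
theorem stmt7 {n : ℕ}
    (A₀ A₁ : Matrix (Fin n) (Fin n) ℂ)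
    (hA₀h : A₀.IsHermitian) (hA₁h : A₁.IsHermitian)
    (hA₀2 : A₀ * A₀ = 1) (hA₁2 : A₁ * A₁ = 1)
    (hanti : A₀ * A₁ + A₁ * A₀ = 0) :
    Even n ∧
      ∃ (k : ℕ) (U : Matrix ((Fin 2) × (Fin k)) (Fin n) ℂ),
        U * Uᴴ = 1 ∧ Uᴴ * U = 1 ∧
        U * A₀ * Uᴴ = sigmaZ ⊗ₖ (1 : Matrix (Fin k) (Fin k) ℂ) ∧
        U * A₁ * Uᴴ = sigmaX ⊗ₖ (1 : Matrix (Fin k) (Fin k) ℂ) := by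
  set std := EuclideanSpace.basisFun (Fin n) ℂ
  set φ := (LinearMap.toMatrixOrthonormal std).symm
  have hsymm {A : Matrix (Fin n) (Fin n) ℂ} (hA : A.IsHermitian) : (φ A).IsSymmetric :=
    (LinearMap.isSymmetric_iff_isSelfAdjoint _).mpr (hA.isSelfAdjoint.map φ)
  obtain ⟨k, e, he⟩ := exists_orthonormalBasis_of_anticommuting_involutions
    (hsymm hA₀h) (hsymm hA₁h) (by rw [← map_mul, hA₀2, map_one])
    (by rw [← map_mul, hA₁2, map_one]) (by rw [← map_mul, ← map_mul, ← map_add, hanti, map_zero])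
  have hn : n = 2 * k := by simpa using Module.finrank_eq_card_basis e.toBasis
  set U := e.toBasis.toMatrix std
  have hconj (A : Matrix (Fin n) (Fin n) ℂ) :
      U * A * Uᴴ = LinearMap.toMatrix e.toBasis e.toBasis (φ A) := by
    have hA : LinearMap.toMatrix std.toBasis std.toBasis (φ A) = A :=
      (LinearMap.toMatrixOrthonormal std).apply_symm_apply A
    rw [← e.toMatrix_mul_toMatrix_mul_conjTranspose std, hA]
  refine ⟨⟨k, by omega⟩, k, U, e.toMatrix_orthonormalBasis_self_mul_conjTranspose std,
    e.toMatrix_orthonormalBasis_conjTranspose_mul_self std, ?_, ?_⟩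
  · rw [hconj]
    refine LinearMap.toMatrix_eq_kroneckerMap_one _ _ _ fun q j ↦ ?_
    fin_cases q <;> simp [Fin.sum_univ_two, sigmaZ, he]
  · rw [hconj]
    refine LinearMap.toMatrix_eq_kroneckerMap_one _ _ _ fun q j ↦ ?_
    fin_cases q <;> simp [Fin.sum_univ_two, sigmaX, he]
end
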